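/- Let Θ ⊆ ℝᵐ be compact and (f_θ)_{θ∈Θ} satisfy: δ ≤ f_θ(λ) ≤ Γ for all θ, λ (0 < δ ≤ Γ < ∞), (λ,θ) ↦ f_θ(λ) is continuous on [−π,π] × Θ, and λ ↦ f_θ(λ) is Lipschitz with constant L uniformly in θ. Let f : [−π,π] → [0,F] be Lipschitz with constant L and suppose D(·,f) has a unique minimizer θ₀ ∈ Θ. Let gₙ : [−π,π] → ℝ be bounded functions with sup_{λ∈[−π,π]} |gₙ(λ) − f(λ)| → 0, and let θ̂₀,ₙ ∈ Θ minimize θ ↦ Dₙ(θ, gₙ) over Θ. Then θ ↦ D(θ,f) is continuous on Θ and θ̂₀,ₙ → θ₀ as n → ∞. -/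

import Mathlib

open Real MeasureTheory Filter Topology

/-- The discrete Whittle contrast. -/
noncomputable def whittleDisc {Θ : Type*} (f : Θ → ℝ → ℝ) (n : ℕ) (g : ℝ → ℝ) (θ : Θ) : ℝ :=
  (1 / (n : ℝ)) * ∑ j ∈ (Finset.Icc (-((n / 2 : ℕ) : ℤ)) ((n / 2 : ℕ) : ℤ)).erase 0,
    (Real.log (f θ (2 * π * (j : ℝ) / (n : ℝ))) +
      g (2 * π * (j : ℝ) / (n : ℝ)) / f θ (2 * π * (j : ℝ) / (n : ℝ)))

/-- The integrated Whittle contrast. -/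
noncomputable def whittleCont {Θ : Type*} (f : Θ → ℝ → ℝ) (g : ℝ → ℝ) (θ : Θ) : ℝ :=
  (1 / (2 * π)) * ∫ x in (-π)..π, (Real.log (f θ x) + g x / f θ x)

/-!
The Whittle integrand `w_θ = log f_θ + f / f_θ` is jointly continuous on `[-π, π] × Θ`, hence
bounded, and it is Lipschitz in `λ` uniformly in `θ` (as `f_θ ≥ δ`). Continuity of `D(·, f)` is
then dominated convergence. The discrete contrast `Dₙ(·, f)` is a Riemann sum of `D(·, f)` whose
error is `O(1/n)` uniformly in `θ`, and replacing `f` by `gₙ` moves it by at most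
`sup |gₙ - f| / δ`; so `Dₙ(·, gₙ) → D(·, f)` uniformly on `Θ`. On the compact set `Θ \ U`, for
any neighbourhood `U` of `θ₀`, the continuous `D(·, f)` stays a fixed gap above `D(θ₀, f)`, and
once the uniform error is below half that gap no minimizer of `Dₙ(·, gₙ)` can lie there.
-/

open Set Interval
open scoped NNReal

theorem abs_mul_sub_integral_le_of_lipschitzOnWith {h : ℝ → ℝ} {K : ℝ≥0} {a b : ℝ}
    (hab : a ≤ b) (hh : LipschitzOnWith K h (Icc a b)) :
    |(b - a) * h b - ∫ x in a..b, h x| ≤ K * (b - a) ^ 2 := by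
  have hint : IntervalIntegrable h volume a b := hh.continuousOn.intervalIntegrable_of_Icc hab
  have hdev : ∀ x ∈ Ι a b, ‖h b - h x‖ ≤ K * (b - a) := by
    intro x hx
    rw [uIoc_of_le hab] at hx
    have hbx := hh.dist_le_mul b (right_mem_Icc.2 hab) x (Ioc_subset_Icc_self hx)
    rw [Real.dist_eq, Real.dist_eq, abs_of_nonneg (sub_nonneg.2 hx.2)] at hbx
    rw [Real.norm_eq_abs]
    exact hbx.trans (by gcongr; linarith [hx.1])
  calc |(b - a) * h b - ∫ x in a..b, h x| = ‖∫ x in a..b, (h b - h x)‖ := by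
        rw [intervalIntegral.integral_sub intervalIntegrable_const hint,
          intervalIntegral.integral_const, smul_eq_mul, Real.norm_eq_abs]
    _ ≤ K * (b - a) * |b - a| := intervalIntegral.norm_integral_le_of_norm_le_const hdev
    _ = K * (b - a) ^ 2 := by rw [abs_of_nonneg (sub_nonneg.2 hab)]; ring

theorem abs_sum_mul_sub_integral_le_of_lipschitzOnWith {h : ℝ → ℝ} {K : ℝ≥0} {a Δ : ℝ}
    (hΔ : 0 ≤ Δ) (N : ℕ) (hh : LipschitzOnWith K h (Icc a (a + N * Δ))) :
    |∑ i ∈ Finset.range N, Δ * h (a + (i + 1) * Δ) - ∫ x in a..a + N * Δ, h x|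
      ≤ N * K * Δ ^ 2 := by
  induction N with
  | zero => simp
  | succ N ih =>
    push_cast at hh ⊢
    have hmid : a + N * Δ ≤ a + (N + 1) * Δ := by linarith
    have hleft : Icc a (a + N * Δ) ⊆ Icc a (a + (N + 1) * Δ) := Icc_subset_Icc_right hmid
    have hright : Icc (a + N * Δ) (a + (N + 1) * Δ) ⊆ Icc a (a + (N + 1) * Δ) :=
      Icc_subset_Icc_left (by nlinarith [N.cast_nonneg (α := ℝ)])
    have hstep := abs_mul_sub_integral_le_of_lipschitzOnWith hmid (hh.mono hright)
    rw [show a + (N + 1) * Δ - (a + N * Δ) = Δ by ring] at hstep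
    rw [Finset.sum_range_succ, ← intervalIntegral.integral_add_adjacent_intervals
      ((hh.mono hleft).continuousOn.intervalIntegrable_of_Icc (by nlinarith [N.cast_nonneg (α := ℝ)]))
      ((hh.mono hright).continuousOn.intervalIntegrable_of_Icc hmid)]
    calc _ = |(∑ i ∈ Finset.range N, Δ * h (a + (i + 1) * Δ) - ∫ x in a..a + N * Δ, h x)
            + (Δ * h (a + (N + 1) * Δ) - ∫ x in a + N * Δ..a + (N + 1) * Δ, h x)| := by congr 1; ring
      _ ≤ N * K * Δ ^ 2 + K * Δ ^ 2 := (abs_add_le _ _).trans (add_le_add (ih (hh.mono hleft)) hstep)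
      _ = (N + 1) * K * Δ ^ 2 := by ring

theorem abs_riemannSum_sub_integral_zero_pi_le {h : ℝ → ℝ} {K : ℝ≥0} {B : ℝ} {n : ℕ}
    (hn : 0 < n) (hh : LipschitzOnWith K h (Icc 0 π)) (hB : ∀ x ∈ Icc 0 π, |h x| ≤ B) :
    |∑ i ∈ Finset.range (n / 2), 2 * π / n * h (2 * π * (i + 1) / n) - ∫ x in (0 : ℝ)..π, h x|
      ≤ (2 * π ^ 2 * K + π * B) / n := by
  have hn' : (0 : ℝ) < n := Nat.cast_pos.2 hn
  set N := n / 2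
  set Δ := 2 * π / n with hΔ
  have hNn : 2 * (N : ℝ) ≤ n := by exact_mod_cast Nat.mul_div_le n 2
  have hnN : (n : ℝ) ≤ 2 * N + 1 := by exact_mod_cast (by omega : n ≤ 2 * N + 1)
  have hNΔ : N * Δ ≤ π := by
    rw [show N * Δ = π * (2 * N / n) by ring]
    exact mul_le_of_le_one_right pi_pos.le ((div_le_one hn').2 hNn)
  have hgap : π - N * Δ ≤ π / n := by
    rw [show π - N * Δ = π * (n - 2 * N) / n by rw [hΔ]; field_simp]
    gcongr
    exact mul_le_of_le_one_right pi_pos.le (by linarith)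
  have hB0 : 0 ≤ B := (abs_nonneg _).trans (hB 0 ⟨le_rfl, pi_pos.le⟩)
  have hsum := abs_sum_mul_sub_integral_le_of_lipschitzOnWith (a := 0) (Δ := Δ) (by positivity) N
    (hh.mono (Icc_subset_Icc_right (by simpa using hNΔ)))
  simp only [zero_add] at hsum
  have hnodes : ∀ i : ℕ, ((i : ℝ) + 1) * Δ = 2 * π * (i + 1) / n := fun i => by ring
  simp only [hnodes] at hsum
  have hmain : N * K * Δ ^ 2 ≤ 2 * π ^ 2 * K / n := by
    rw [show N * K * Δ ^ 2 = 2 * N / n * (2 * π ^ 2 * K / n) by ring]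
    exact mul_le_of_le_one_left (by positivity) ((div_le_one hn').2 hNn)
  have htail : |∫ x in N * Δ..π, h x| ≤ π * B / n := by
    have hbd : ∀ x ∈ Ι (N * Δ) π, ‖h x‖ ≤ B := fun x hx => by
      rw [uIoc_of_le hNΔ] at hx
      exact hB x ⟨(by positivity : (0 : ℝ) ≤ N * Δ).trans hx.1.le, hx.2⟩
    calc |∫ x in N * Δ..π, h x| ≤ B * |π - N * Δ| :=
          intervalIntegral.norm_integral_le_of_norm_le_const hbd
      _ ≤ B * (π / n) := by rw [abs_of_nonneg (sub_nonneg.2 hNΔ)]; gcongr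
      _ = π * B / n := by ring
  have hcont := hh.continuousOn
  rw [← intervalIntegral.integral_add_adjacent_intervals (b := N * Δ)
    ((hcont.mono (Icc_subset_Icc_right hNΔ)).intervalIntegrable_of_Icc (by positivity))
    ((hcont.mono (Icc_subset_Icc_left (by positivity))).intervalIntegrable_of_Icc hNΔ)]
  rw [sub_add_eq_sub_sub]
  calc _ ≤ 2 * π ^ 2 * K / n + π * B / n := (abs_sub _ _).trans (add_le_add (hsum.trans hmain) htail)
    _ = (2 * π ^ 2 * K + π * B) / n := by ring

/-- The index set `G(n)` of the Fourier frequencies `λ_{j,n} = 2πj/n`. -/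
noncomputable def fourierIndices (n : ℕ) : Finset ℤ :=
  (Finset.Icc (-((n / 2 : ℕ) : ℤ)) ((n / 2 : ℕ) : ℤ)).erase 0

noncomputable def fourierRiemannSum (n : ℕ) (h : ℝ → ℝ) : ℝ :=
  (1 / (n : ℝ)) * ∑ j ∈ fourierIndices n, h (2 * π * (j : ℝ) / (n : ℝ))

theorem sum_Icc_neg_erase_zero {M : Type*} [AddCommMonoid M] (φ : ℤ → M) (k : ℕ) :
    ∑ j ∈ (Finset.Icc (-(k : ℤ)) k).erase 0, φ j
      = ∑ i ∈ Finset.range k, (φ (i + 1) + φ (-(i + 1))) := by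
  induction k with
  | zero => simp
  | succ k ih =>
    have hset : (Finset.Icc (-((k + 1 : ℕ) : ℤ)) ((k + 1 : ℕ) : ℤ)).erase 0
        = insert ((k : ℤ) + 1) (insert (-((k : ℤ) + 1)) ((Finset.Icc (-(k : ℤ)) k).erase 0)) := by
      ext j; simp; omega
    rw [hset, Finset.sum_insert (by simp; omega), Finset.sum_insert (by simp), ih,
      Finset.sum_range_succ]
    abel

theorem card_fourierIndices_le (n : ℕ) : (fourierIndices n).card ≤ n := by
  rw [fourierIndices, Finset.card_erase_of_mem (by simp only [Finset.mem_Icc]; omega), Int.card_Icc]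
  omega

theorem mem_Icc_of_mem_fourierIndices {n : ℕ} {j : ℤ} (hj : j ∈ fourierIndices n) :
    2 * π * (j : ℝ) / n ∈ Icc (-π) π := by
  simp only [fourierIndices, Finset.mem_erase, Finset.mem_Icc] at hj
  have h2j : |2 * (j : ℝ)| ≤ n := by
    rw [abs_le]; constructor <;> norm_cast <;> omega
  rcases n.eq_zero_or_pos with rfl | hn
  · simp [pi_pos.le]
  rw [mem_Icc, ← abs_le, abs_div, Nat.abs_cast, div_le_iff₀ (Nat.cast_pos.2 hn),
    show 2 * π * (j : ℝ) = π * (2 * j) by ring, abs_mul, abs_of_pos pi_pos]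
  gcongr

theorem abs_fourierRiemannSum_sub_le {h₁ h₂ : ℝ → ℝ} {ε : ℝ} (n : ℕ)
    (hε : ∀ x ∈ Icc (-π) π, |h₁ x - h₂ x| ≤ ε) :
    |fourierRiemannSum n h₁ - fourierRiemannSum n h₂| ≤ ε := by
  have hε0 : 0 ≤ ε := (abs_nonneg _).trans (hε 0 ⟨by linarith [pi_pos], pi_pos.le⟩)
  rcases n.eq_zero_or_pos with rfl | hn
  · simpa [fourierRiemannSum] using hε0
  have hn' : (0 : ℝ) < n := Nat.cast_pos.2 hn
  rw [fourierRiemannSum, fourierRiemannSum, ← mul_sub, ← Finset.sum_sub_distrib, abs_mul,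
    abs_of_pos (by positivity), one_div_mul_eq_div, div_le_iff₀ hn']
  calc _ ≤ ∑ j ∈ fourierIndices n, ε :=
        (Finset.abs_sum_le_sum_abs _ _).trans
          (Finset.sum_le_sum fun j hj => hε _ (mem_Icc_of_mem_fourierIndices hj))
    _ = (fourierIndices n).card * ε := by rw [Finset.sum_const, nsmul_eq_mul]
    _ ≤ ε * n := by rw [mul_comm]; gcongr; exact_mod_cast card_fourierIndices_le n

theorem abs_fourierRiemannSum_sub_integral_le {h : ℝ → ℝ} {K : ℝ≥0} {B : ℝ} {n : ℕ}
    (hn : 0 < n) (hh : LipschitzOnWith K h (Icc (-π) π)) (hB : ∀ x ∈ Icc (-π) π, |h x| ≤ B) :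
    |fourierRiemannSum n h - (1 / (2 * π)) * ∫ x in (-π)..π, h x| ≤ (2 * π * K + B) / n := by
  have hsub : Icc 0 π ⊆ Icc (-π) π := Icc_subset_Icc_left (by linarith [pi_pos])
  have hneg : MapsTo (fun x : ℝ => -x) (Icc 0 π) (Icc (-π) π) := fun x hx =>
    ⟨neg_le_neg hx.2, by linarith [hx.1, pi_pos]⟩
  have hh' : LipschitzOnWith K (fun x => h (-x)) (Icc 0 π) := fun x hx y hy => by
    simpa [edist_neg_neg] using hh (hneg hx) (hneg hy)
  have hright := abs_riemannSum_sub_integral_zero_pi_le hn (hh.mono hsub) fun x hx => hB x (hsub hx)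
  have hleft := abs_riemannSum_sub_integral_zero_pi_le hn hh' fun x hx => hB _ (hneg hx)
  have hsum : fourierRiemannSum n h = 1 / (2 * π) *
      (∑ i ∈ Finset.range (n / 2), 2 * π / n * h (2 * π * (i + 1) / n)
        + ∑ i ∈ Finset.range (n / 2), 2 * π / n * h (-(2 * π * (i + 1) / n))) := by
    rw [fourierRiemannSum, fourierIndices, sum_Icc_neg_erase_zero, ← Finset.sum_add_distrib,
      Finset.mul_sum, Finset.mul_sum]
    refine Finset.sum_congr rfl fun i _ => ?_
    push_cast
    rw [show 2 * π * -((i : ℝ) + 1) / n = -(2 * π * (i + 1) / n) by ring]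
    field_simp
  have hint : ∫ x in (-π)..π, h x = (∫ x in (0 : ℝ)..π, h x) + ∫ x in (0 : ℝ)..π, h (-x) := by
    have hcont := hh.continuousOn
    rw [intervalIntegral.integral_comp_neg, neg_zero, add_comm,
      intervalIntegral.integral_add_adjacent_intervals
        ((hcont.mono (Icc_subset_Icc_right pi_pos.le)).intervalIntegrable_of_Icc
          (by linarith [pi_pos]))
        ((hcont.mono hsub).intervalIntegrable_of_Icc pi_pos.le)]
  rw [hsum, hint, ← mul_sub, abs_mul, abs_of_pos (by positivity)]
  calc _ ≤ 1 / (2 * π) * ((2 * π ^ 2 * K + π * B) / n + (2 * π ^ 2 * K + π * B) / n) := by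
        gcongr
        calc _ = |(∑ i ∈ Finset.range (n / 2), 2 * π / n * h (2 * π * (i + 1) / n)
                  - ∫ x in (0 : ℝ)..π, h x)
                + (∑ i ∈ Finset.range (n / 2), 2 * π / n * h (-(2 * π * (i + 1) / n))
                  - ∫ x in (0 : ℝ)..π, h (-x))| := by congr 1; ring
          _ ≤ _ := (abs_add_le _ _).trans (add_le_add hright hleft)
    _ = (2 * π * K + B) / n := by field_simp; ring

theorem abs_log_sub_log_le {δ a b : ℝ} (hδ : 0 < δ) (ha : δ ≤ a) (hb : δ ≤ b) :
    |log a - log b| ≤ |a - b| / δ := by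
  wlog hab : b ≤ a generalizing a b
  · rw [abs_sub_comm, abs_sub_comm a]; exact this hb ha (le_of_not_ge hab)
  have hb0 : 0 < b := hδ.trans_le hb
  rw [abs_of_nonneg (sub_nonneg.2 (log_le_log hb0 hab)), abs_of_nonneg (sub_nonneg.2 hab),
    ← log_div (by linarith) hb0.ne']
  calc log (a / b) ≤ a / b - 1 := log_le_sub_one_of_pos (div_pos (hb0.trans_le hab) hb0)
    _ = (a - b) / b := by field_simp
    _ ≤ (a - b) / δ := by gcongr

theorem abs_div_sub_div_le {δ F a b c d : ℝ} (hδ : 0 < δ) (hc : δ ≤ c) (hd : δ ≤ d)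
    (hb : 0 ≤ b) (hbF : b ≤ F) : |a / c - b / d| ≤ |a - b| / δ + F * |c - d| / δ ^ 2 := by
  have hc0 : 0 < c := hδ.trans_le hc
  have hd0 : 0 < d := hδ.trans_le hd
  rw [show a / c - b / d = (a - b) / c + b * (d - c) / (c * d) by field_simp; ring]
  refine (abs_add_le _ _).trans (add_le_add ?_ ?_)
  · rw [abs_div, abs_of_pos hc0]; gcongr
  · rw [abs_div, abs_mul, abs_of_nonneg hb, abs_of_pos (mul_pos hc0 hd0), abs_sub_comm, sq]
    gcongr
    exact mul_nonneg (hb.trans hbF) (abs_nonneg _)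

noncomputable def whittleIntegrand {Θ : Type*} (f : Θ → ℝ → ℝ) (g : ℝ → ℝ) (θ : Θ) (x : ℝ) : ℝ :=
  log (f θ x) + g x / f θ x

theorem whittleDisc_eq_fourierRiemannSum {Θ : Type*} (f : Θ → ℝ → ℝ) (n : ℕ) (g : ℝ → ℝ)
    (θ : Θ) : whittleDisc f n g θ = fourierRiemannSum n (whittleIntegrand f g θ) := rfl

theorem whittleCont_eq_integral {Θ : Type*} (f : Θ → ℝ → ℝ) (g : ℝ → ℝ) (θ : Θ) :
    whittleCont f g θ = (1 / (2 * π)) * ∫ x in (-π)..π, whittleIntegrand f g θ x := rfl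

theorem lipschitzOnWith_whittleIntegrand {Θ : Type*} {f : Θ → ℝ → ℝ} {g : ℝ → ℝ} {θ : Θ}
    {s : Set ℝ} {δ L F : ℝ} (hδ : 0 < δ) (hfδ : ∀ x ∈ s, δ ≤ f θ x)
    (hg : ∀ x ∈ s, 0 ≤ g x ∧ g x ≤ F)
    (hflip : ∀ x ∈ s, ∀ y ∈ s, |f θ x - f θ y| ≤ L * |x - y|)
    (hglip : ∀ x ∈ s, ∀ y ∈ s, |g x - g y| ≤ L * |x - y|) :
    LipschitzOnWith (2 * L / δ + F * L / δ ^ 2).toNNReal (whittleIntegrand f g θ) s := by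
  refine LipschitzOnWith.of_dist_le' fun x hx y hy => ?_
  have hF : 0 ≤ F := (hg x hx).1.trans (hg x hx).2
  rw [Real.dist_eq, Real.dist_eq, whittleIntegrand, whittleIntegrand, add_sub_add_comm]
  calc _ ≤ |log (f θ x) - log (f θ y)| + |g x / f θ x - g y / f θ y| := abs_add_le _ _
    _ ≤ |f θ x - f θ y| / δ + (|g x - g y| / δ + F * |f θ x - f θ y| / δ ^ 2) :=
        add_le_add (abs_log_sub_log_le hδ (hfδ x hx) (hfδ y hy))
          (abs_div_sub_div_le hδ (hfδ x hx) (hfδ y hy) (hg y hy).1 (hg y hy).2)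
    _ ≤ L * |x - y| / δ + (L * |x - y| / δ + F * (L * |x - y|) / δ ^ 2) := by
        gcongr
        exacts [hflip x hx y hy, hglip x hx y hy, hflip x hx y hy]
    _ = (2 * L / δ + F * L / δ ^ 2) * |x - y| := by ring

theorem continuousOn_whittleIntegrand {X : Type*} [TopologicalSpace X] {f : X → ℝ → ℝ}
    {g : ℝ → ℝ} {s : Set ℝ} {Θ : Set X}
    (hf : ContinuousOn (fun p : ℝ × X => f p.2 p.1) (s ×ˢ Θ))
    (hf0 : ∀ p ∈ s ×ˢ Θ, f p.2 p.1 ≠ 0) (hg : ContinuousOn g s) :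
    ContinuousOn (fun p : ℝ × X => whittleIntegrand f g p.2 p.1) (s ×ˢ Θ) :=
  (hf.log hf0).add ((hg.comp continuousOn_fst fun _ hp => hp.1).div hf hf0)

theorem continuousOn_intervalIntegral_of_continuousOn_prod {X : Type*} [TopologicalSpace X]
    [FirstCountableTopology X] {F : X → ℝ → ℝ} {s : Set X} {a b : ℝ} (hs : IsCompact s)
    (hab : a ≤ b) (hF : ContinuousOn (fun p : ℝ × X => F p.2 p.1) (Icc a b ×ˢ s)) :
    ContinuousOn (fun x => ∫ t in a..b, F x t) s := by
  obtain ⟨B, hB⟩ := (isCompact_Icc.prod hs).exists_bound_of_continuousOn hF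
  have hIoc : Ι a b ⊆ Icc a b := by rw [uIoc_of_le hab]; exact Ioc_subset_Icc_self
  intro x₀ hx₀
  refine intervalIntegral.continuousWithinAt_of_dominated_interval (bound := fun _ => B) ?_ ?_
    intervalIntegrable_const (ae_of_all _ fun t ht => ?_)
  · filter_upwards [self_mem_nhdsWithin] with x hx
    exact ((hF.comp (continuousOn_id.prodMk continuousOn_const) fun t ht => ⟨ht, hx⟩).mono
      hIoc).aestronglyMeasurable measurableSet_uIoc
  · filter_upwards [self_mem_nhdsWithin] with x hx
    exact ae_of_all _ fun t ht => hB (t, x) ⟨hIoc ht, hx⟩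
  · exact (hF (t, x₀) ⟨hIoc ht, hx₀⟩).comp (continuousWithinAt_const.prodMk continuousWithinAt_id)
      fun x hx => ⟨hIoc ht, hx⟩

theorem tendstoUniformlyOn_whittleDisc {X : Type*} {Θ : Set X} {f : X → ℝ → ℝ} {f₀ : ℝ → ℝ}
    {g : ℕ → ℝ → ℝ} {δ C : ℝ} (hδ : 0 < δ) (hfδ : ∀ θ ∈ Θ, ∀ x ∈ Icc (-π) π, δ ≤ f θ x)
    (hg : TendstoUniformlyOn g f₀ atTop (Icc (-π) π))
    (hC : ∀ n, 0 < n → ∀ θ ∈ Θ, |whittleDisc f n f₀ θ - whittleCont f f₀ θ| ≤ C / n) :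
    TendstoUniformlyOn (fun n => whittleDisc f n (g n)) (whittleCont f f₀) atTop Θ := by
  rw [Metric.tendstoUniformlyOn_iff]
  intro ε hε
  filter_upwards [Metric.tendstoUniformlyOn_iff.1 hg (ε / 2 * δ) (by positivity),
    (tendsto_const_div_atTop_nhds_zero_nat C).eventually (gt_mem_nhds (half_pos hε)),
    eventually_gt_atTop 0] with n hgn hCn hn θ hθ
  have hperturb : |whittleDisc f n (g n) θ - whittleDisc f n f₀ θ| ≤ ε / 2 := by
    rw [whittleDisc_eq_fourierRiemannSum, whittleDisc_eq_fourierRiemannSum]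
    refine abs_fourierRiemannSum_sub_le n fun x hx => ?_
    have hfx : 0 < f θ x := hδ.trans_le (hfδ θ hθ x hx)
    rw [whittleIntegrand, whittleIntegrand, add_sub_add_left_eq_sub, ← sub_div, abs_div,
      abs_of_pos hfx, div_le_iff₀ hfx, abs_sub_comm, ← Real.dist_eq]
    calc dist (f₀ x) (g n x) ≤ ε / 2 * δ := (hgn x hx).le
      _ ≤ ε / 2 * f θ x := by gcongr; exact hfδ θ hθ x hx
  rw [Real.dist_eq, abs_sub_comm]
  calc _ ≤ |whittleDisc f n (g n) θ - whittleDisc f n f₀ θ|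
        + |whittleDisc f n f₀ θ - whittleCont f f₀ θ| := abs_sub_le _ _ _
    _ < ε / 2 + ε / 2 := add_lt_add_of_le_of_lt hperturb ((hC n hn θ hθ).trans_lt hCn)
    _ = ε := add_halves ε

theorem tendsto_of_isMinOn_of_tendstoUniformlyOn {X ι : Type*} [TopologicalSpace X]
    {l : Filter ι} {Θ : Set X} (hΘ : IsCompact Θ) {D : X → ℝ} {Dn : ι → X → ℝ}
    (hD : ContinuousOn D Θ) (hDn : TendstoUniformlyOn Dn D l Θ) {θ₀ : X} (hθ₀ : θ₀ ∈ Θ)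
    (huniq : ∀ θ ∈ Θ, θ ≠ θ₀ → D θ₀ < D θ) {θhat : ι → X} (hθhat : ∀ i, θhat i ∈ Θ)
    (hmin : ∀ i, IsMinOn (Dn i) Θ (θhat i)) : Tendsto θhat l (𝓝 θ₀) := by
  rw [tendsto_nhds]
  intro U hU hθ₀U
  rcases (Θ \ U).eq_empty_or_nonempty with hempty | hne
  · exact Eventually.of_forall fun i => by
      by_contra hi
      exact hempty.subset ⟨hθhat i, hi⟩
  obtain ⟨θ₁, hθ₁, hθ₁min⟩ := (hΘ.diff hU).exists_isMinOn hne (hD.mono sdiff_subset)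
  have hgap : D θ₀ < D θ₁ := huniq θ₁ hθ₁.1 fun h => hθ₁.2 (h ▸ hθ₀U)
  filter_upwards [Metric.tendstoUniformlyOn_iff.1 hDn _ (half_pos (sub_pos.2 hgap))] with i hi
  by_contra hiU
  have h₁ : D θ₁ ≤ D (θhat i) := hθ₁min ⟨hθhat i, hiU⟩
  have h₂ := hi _ (hθhat i)
  have h₃ := hi θ₀ hθ₀
  have h₄ : Dn i (θhat i) ≤ Dn i θ₀ := hmin i hθ₀
  rw [Real.dist_eq, abs_lt] at h₂ h₃
  linarith [h₂.1, h₃.2]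

theorem stmt_4_general {m : ℕ} (Θ : Set (EuclideanSpace ℝ (Fin m))) (hΘ : IsCompact Θ)
    (δ Γ L F : ℝ) (hδ : 0 < δ)
    (f : EuclideanSpace ℝ (Fin m) → ℝ → ℝ)
    (hbound : ∀ θ ∈ Θ, ∀ x ∈ Set.Icc (-π) π, δ ≤ f θ x ∧ f θ x ≤ Γ)
    (hcont : ContinuousOn (fun p : ℝ × EuclideanSpace ℝ (Fin m) => f p.2 p.1)
      (Set.Icc (-π) π ×ˢ Θ))
    (hlip : ∀ θ ∈ Θ, ∀ x ∈ Set.Icc (-π) π, ∀ y ∈ Set.Icc (-π) π,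
      |f θ x - f θ y| ≤ L * |x - y|)
    (f₀ : ℝ → ℝ) (hf₀ : ∀ x ∈ Set.Icc (-π) π, 0 ≤ f₀ x ∧ f₀ x ≤ F)
    (hf₀lip : ∀ x ∈ Set.Icc (-π) π, ∀ y ∈ Set.Icc (-π) π, |f₀ x - f₀ y| ≤ L * |x - y|)
    (θ₀ : EuclideanSpace ℝ (Fin m)) (hθ₀ : θ₀ ∈ Θ)
    (hmin : ∀ θ ∈ Θ, θ ≠ θ₀ → whittleCont f f₀ θ₀ < whittleCont f f₀ θ)
    (g : ℕ → ℝ → ℝ)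
    (hgconv : ∀ ε > (0 : ℝ), ∃ N : ℕ, ∀ n ≥ N, ∀ x ∈ Set.Icc (-π) π, |g n x - f₀ x| ≤ ε)
    (θhat : ℕ → EuclideanSpace ℝ (Fin m)) (hθhatΘ : ∀ n, θhat n ∈ Θ)
    (hθhatmin : ∀ n, ∀ θ ∈ Θ, whittleDisc f n (g n) (θhat n) ≤ whittleDisc f n (g n) θ) :
    ContinuousOn (whittleCont f f₀) Θ ∧ Tendsto θhat atTop (𝓝 θ₀) := by
  have hfδ θ (hθ : θ ∈ Θ) x (hx : x ∈ Icc (-π) π) : δ ≤ f θ x := (hbound θ hθ x hx).1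
  have hw : ContinuousOn (fun p => whittleIntegrand f f₀ p.2 p.1) (Icc (-π) π ×ˢ Θ) :=
    continuousOn_whittleIntegrand hcont (fun p hp => (hδ.trans_le (hfδ _ hp.2 _ hp.1)).ne')
      (LipschitzOnWith.of_dist_le' (K := L) hf₀lip).continuousOn
  obtain ⟨B, hB⟩ := (isCompact_Icc.prod hΘ).exists_bound_of_continuousOn hw
  have hD : ContinuousOn (whittleCont f f₀) Θ :=
    continuousOn_const.mul
      (continuousOn_intervalIntegral_of_continuousOn_prod hΘ (by linarith [pi_pos]) hw)
  have hg : TendstoUniformlyOn g f₀ atTop (Icc (-π) π) :=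
    Metric.tendstoUniformlyOn_iff.2 fun ε hε => by
      obtain ⟨N, hN⟩ := hgconv (ε / 2) (half_pos hε)
      filter_upwards [eventually_ge_atTop N] with n hn x hx
      rw [Real.dist_eq, abs_sub_comm]
      exact (hN n hn x hx).trans_lt (half_lt_self hε)
  have hDn := tendstoUniformlyOn_whittleDisc hδ hfδ hg fun n hn θ hθ => by
    rw [whittleDisc_eq_fourierRiemannSum, whittleCont_eq_integral]
    exact abs_fourierRiemannSum_sub_integral_le hn
      (lipschitzOnWith_whittleIntegrand hδ (hfδ θ hθ) hf₀ (hlip θ hθ) hf₀lip)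
      fun x hx => hB (x, θ) ⟨hx, hθ⟩
  exact ⟨hD, tendsto_of_isMinOn_of_tendstoUniformlyOn hΘ hD hDn hθ₀ hmin hθhatΘ
    fun n θ hθ => hθhatmin n θ hθ⟩

/-- Deterministic form of Lemma 7.1(i): the minimizers of the discrete Whittle contrast
with uniformly convergent estimated spectral densities converge to the unique minimizer
of the integrated Whittle contrast. -/
theorem stmt_4 {m : ℕ} (Θ : Set (EuclideanSpace ℝ (Fin m))) (hΘ : IsCompact Θ)
    (δ Γ L F : ℝ) (hδ : 0 < δ) (hΓ : δ ≤ Γ) (hL : 0 ≤ L) (hF : 0 ≤ F)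
    (f : EuclideanSpace ℝ (Fin m) → ℝ → ℝ)
    (hbound : ∀ θ ∈ Θ, ∀ x ∈ Set.Icc (-π) π, δ ≤ f θ x ∧ f θ x ≤ Γ)
    (hcont : ContinuousOn (fun p : ℝ × EuclideanSpace ℝ (Fin m) => f p.2 p.1)
      (Set.Icc (-π) π ×ˢ Θ))
    (hlip : ∀ θ ∈ Θ, ∀ x ∈ Set.Icc (-π) π, ∀ y ∈ Set.Icc (-π) π,
      |f θ x - f θ y| ≤ L * |x - y|)
    (f₀ : ℝ → ℝ) (hf₀ : ∀ x ∈ Set.Icc (-π) π, 0 ≤ f₀ x ∧ f₀ x ≤ F)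
    (hf₀lip : ∀ x ∈ Set.Icc (-π) π, ∀ y ∈ Set.Icc (-π) π, |f₀ x - f₀ y| ≤ L * |x - y|)
    (θ₀ : EuclideanSpace ℝ (Fin m)) (hθ₀ : θ₀ ∈ Θ)
    (hmin : ∀ θ ∈ Θ, θ ≠ θ₀ → whittleCont f f₀ θ₀ < whittleCont f f₀ θ)
    (g : ℕ → ℝ → ℝ) (hgb : ∀ n, ∃ M, ∀ x, |g n x| ≤ M)
    (hgconv : ∀ ε > (0 : ℝ), ∃ N : ℕ, ∀ n ≥ N, ∀ x ∈ Set.Icc (-π) π, |g n x - f₀ x| ≤ ε)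
    (θhat : ℕ → EuclideanSpace ℝ (Fin m)) (hθhatΘ : ∀ n, θhat n ∈ Θ)
    (hθhatmin : ∀ n, ∀ θ ∈ Θ, whittleDisc f n (g n) (θhat n) ≤ whittleDisc f n (g n) θ) :
    ContinuousOn (whittleCont f f₀) Θ ∧ Tendsto θhat atTop (𝓝 θ₀) :=
  stmt_4_general Θ hΘ δ Γ L F hδ f hbound hcont hlip f₀ hf₀ hf₀lip θ₀ hθ₀ hmin g hgconv θhat hθhatΘ
    hθhatmin
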